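/- For positive semidefinite operators A, B, C on a finite-dimensional Hilbert space with supp(A) ⊆ supp(B) and B ≤ C, the operator norm of C^{-1/2} A C^{-1/2} is at most the operator norm of B^{-1/2} A B^{-1/2}, where the inverses are generalized (Moore–Penrose) inverses. -/

import Mathlib

open scoped ComplexOrder Kronecker
open Matrix Classical

noncomputable def msqrt {n : Type*} [Fintype n] [DecidableEq n] (A : Matrix n n ℂ) :
    Matrix n n ℂ :=
  if h : A.PosSemidef then
    (h.1.eigenvectorUnitary : Matrix n n ℂ) *
      Matrix.diagonal (fun i => ((Real.sqrt (h.1.eigenvalues i) : ℝ) : ℂ)) *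
      (star h.1.eigenvectorUnitary : Matrix n n ℂ)
  else 0

noncomputable def traceNorm {n : Type*} [Fintype n] [DecidableEq n] (A : Matrix n n ℂ) : ℝ :=
  (msqrt (Aᴴ * A)).trace.re

noncomputable def fid {n : Type*} [Fintype n] [DecidableEq n] (ρ σ : Matrix n n ℂ) : ℝ :=
  traceNorm (msqrt ρ * msqrt σ) + Real.sqrt ((1 - ρ.trace.re) * (1 - σ.trace.re))

noncomputable def pdist {n : Type*} [Fintype n] [DecidableEq n] (ρ σ : Matrix n n ℂ) : ℝ :=
  Real.sqrt (1 - (fid ρ σ) ^ 2)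

/-- Loewner order: `A ≤ B` iff `B - A` is positive semidefinite. -/
def loewnerLE {n : Type*} [Fintype n] (A B : Matrix n n ℂ) : Prop := (B - A).PosSemidef

/-- Max-relative entropy `D_max(ρ‖σ) = min {λ : ρ ≤ 2^λ σ}`. -/
noncomputable def Dmax {n : Type*} [Fintype n] (ρ σ : Matrix n n ℂ) : ℝ :=
  sInf {l : ℝ | loewnerLE ρ (((2 : ℝ) ^ l) • σ)}

def Subnormalized {n : Type*} [Fintype n] (ρ : Matrix n n ℂ) : Prop :=
  ρ.PosSemidef ∧ 0 < ρ.trace.re ∧ ρ.trace.re ≤ 1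

def IsDensity {n : Type*} [Fintype n] (ρ : Matrix n n ℂ) : Prop :=
  ρ.PosSemidef ∧ ρ.trace = 1

/-- Operator norm (largest singular value). -/
noncomputable def opNorm {n : Type*} [Fintype n] [DecidableEq n] (A : Matrix n n ℂ) : ℝ :=
  ‖Matrix.toEuclideanCLM (𝕜 := ℂ) A‖

/-- Square root of the Moore–Penrose pseudoinverse of a Hermitian matrix. -/
noncomputable def pinvSqrt {n : Type*} [Fintype n] [DecidableEq n] (A : Matrix n n ℂ) :
    Matrix n n ℂ :=
  if h : A.IsHermitian then
    (h.eigenvectorUnitary : Matrix n n ℂ) *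
      Matrix.diagonal (fun i => ((Real.sqrt (h.eigenvalues i))⁻¹ : ℂ)) *
      (star h.eigenvectorUnitary : Matrix n n ℂ)
  else 0

/-- Support (range) of a matrix. -/
noncomputable def msupp {n : Type*} [Fintype n] (A : Matrix n n ℂ) : Submodule ℂ (n → ℂ) :=
  LinearMap.range A.mulVecLin

/-!
Put `r = ‖B^{-1/2} A B^{-1/2}‖`. Since `B^{-1/2} A B^{-1/2} ≤ r`, conjugating by `B^{1/2}` gives
`A ≤ r B`: the support condition makes `B^{1/2} B^{-1/2}` act as the identity on `A`. Hence
`A ≤ r C`, and conjugating by `C^{-1/2}` gives `C^{-1/2} A C^{-1/2} ≤ r C^{-1/2} C C^{-1/2} ≤ r`,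
the last operator being the projection onto `supp C`. For positive operators the order bound
`X ≤ r` is the norm bound `‖X‖ ≤ r`.
-/

section CStarAlgebra

variable {A : Type*} [CStarAlgebra A] [PartialOrder A] [StarOrderedRing A]

lemma IsSelfAdjoint.conjugate_le_norm_smul {x t : A} (hx : IsSelfAdjoint x)
    (ht : IsSelfAdjoint t) : t * x * t ≤ ‖x‖ • (t * t) := by
  have := ht.conjugate_le_conjugate hx.le_algebraMap_norm_self
  rwa [Algebra.algebraMap_eq_smul_one, mul_smul_comm, mul_one, smul_mul_assoc] at this

lemma norm_conjugate_le_of_le_smul {a c s : A} {r : ℝ} (ha : 0 ≤ a) (hr : 0 ≤ r)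
    (hs : IsSelfAdjoint s) (hac : a ≤ r • c) (hcs : s * c * s ≤ 1) : ‖s * a * s‖ ≤ r := by
  rw [CStarAlgebra.norm_le_iff_le_algebraMap _ hr (hs.conjugate_nonneg ha),
    Algebra.algebraMap_eq_smul_one]
  calc s * a * s ≤ s * (r • c) * s := hs.conjugate_le_conjugate hac
    _ = r • (s * c * s) := by rw [mul_smul_comm, smul_mul_assoc]
    _ ≤ r • 1 := smul_le_smul_of_nonneg_left hcs hr

end CStarAlgebra

open scoped MatrixOrder Matrix.Norms.L2Operator

section Matrix

variable {n : Type*} [Fintype n]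

lemma mul_eq_self_of_msupp_le {A B P : Matrix n n ℂ} (hsupp : msupp A ≤ msupp B)
    (hP : P * B = B) : P * A = A := by
  refine ext_iff_mulVec.mpr fun v => ?_
  obtain ⟨w, hw⟩ := hsupp ⟨v, rfl⟩
  simp only [mulVecLin_apply] at hw
  rw [← mulVec_mulVec, ← hw, mulVec_mulVec, hP]

variable [DecidableEq n]

lemma opNorm_eq_norm (M : Matrix n n ℂ) : opNorm M = ‖M‖ := rfl

lemma Matrix.continuousOn_spectrum (M : Matrix n n ℂ) (f : ℝ → ℝ) : ContinuousOn f (spectrum ℝ M) :=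
  (Set.toFinite _).continuousOn f

lemma pinvSqrt_eq_cfc {M : Matrix n n ℂ} (hM : M.IsHermitian) :
    pinvSqrt M = cfc (fun x => (√x)⁻¹) M := by
  rw [pinvSqrt, dif_pos hM, hM.cfc_eq, IsHermitian.cfc, Unitary.conjStarAlgAut_apply]
  simp [Function.comp_def]

lemma isSelfAdjoint_pinvSqrt (M : Matrix n n ℂ) : IsSelfAdjoint (pinvSqrt M) := by
  by_cases hM : M.IsHermitian
  · rw [pinvSqrt_eq_cfc hM]
    exact IsSelfAdjoint.cfc
  · rw [pinvSqrt, dif_neg hM]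
    exact .zero _

lemma pinvSqrt_mul_self_mul_pinvSqrt_le_one {M : Matrix n n ℂ} (hM : M.IsHermitian) :
    pinvSqrt M * M * pinvSqrt M ≤ 1 := by
  have hcont := M.continuousOn_spectrum
  nth_rw 2 [← cfc_id' ℝ M hM.isSelfAdjoint]
  rw [pinvSqrt_eq_cfc hM, ← cfc_mul _ _ _ (hcont _) (hcont _), ← cfc_mul _ _ _ (hcont _) (hcont _)]
  refine cfc_le_one _ _ fun x _ => ?_
  rcases le_or_gt x 0 with hx | hx
  · simp [Real.sqrt_eq_zero'.mpr hx]
  · rw [mul_comm, ← mul_assoc, ← mul_inv, ← sq, Real.sq_sqrt hx.le, inv_mul_cancel₀ hx.ne']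

lemma sqrt_mul_pinvSqrt_mul_self {M : Matrix n n ℂ} (hM : 0 ≤ M) :
    CFC.sqrt M * pinvSqrt M * M = M := by
  have hcont := M.continuousOn_spectrum
  have hsa : IsSelfAdjoint M := .of_nonneg hM
  rw [CFC.sqrt_eq_real_sqrt M hM, cfcₙ_eq_cfc, pinvSqrt_eq_cfc hsa]
  conv_lhs => rhs; rw [← cfc_id' ℝ M hsa]
  rw [← cfc_mul _ _ _ (hcont _) (hcont _), ← cfc_mul _ _ _ (hcont _) (hcont _)]
  conv_rhs => rw [← cfc_id' ℝ M hsa]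
  refine cfc_congr fun x hx => ?_
  rcases (spectrum_nonneg_of_nonneg hM hx).eq_or_lt with rfl | hx
  · simp
  · rw [mul_inv_cancel₀ (Real.sqrt_pos.mpr hx).ne', one_mul]

lemma le_norm_pinvSqrt_conjugate_smul {A B : Matrix n n ℂ} (hA : IsSelfAdjoint A) (hB : 0 ≤ B)
    (hsupp : msupp A ≤ msupp B) : A ≤ ‖pinvSqrt B * A * pinvSqrt B‖ • B := by
  set t := CFC.sqrt B
  set P := pinvSqrt B
  have ht : IsSelfAdjoint t := .of_nonneg (CFC.sqrt_nonneg B)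
  have hP : IsSelfAdjoint P := isSelfAdjoint_pinvSqrt B
  have hleft : t * P * A = A := mul_eq_self_of_msupp_le hsupp (sqrt_mul_pinvSqrt_mul_self hB)
  have hright : A * P * t = A := by
    simpa only [star_mul, hA.star_eq, hP.star_eq, ht.star_eq, mul_assoc] using congr(star $hleft)
  have hconj : t * (P * A * P) * t = A := by
    calc t * (P * A * P) * t = (t * P * A) * P * t := by simp only [mul_assoc]
      _ = A := by rw [hleft, hright]
  have := (hA.conjugate_self hP).conjugate_le_norm_smul ht
  rwa [hconj, CFC.sqrt_mul_sqrt_self B hB] at this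

end Matrix

theorem stmt0 {n : Type*} [Fintype n] [DecidableEq n] (A B C : Matrix n n ℂ)
    (hA : A.PosSemidef) (hB : B.PosSemidef) (hC : C.PosSemidef)
    (hsupp : msupp A ≤ msupp B) (hBC : loewnerLE B C) :
    opNorm (pinvSqrt C * A * pinvSqrt C) ≤ opNorm (pinvSqrt B * A * pinvSqrt B) := by
  rw [opNorm_eq_norm, opNorm_eq_norm]
  have hA' : 0 ≤ A := nonneg_iff_posSemidef.mpr hA
  set r := ‖pinvSqrt B * A * pinvSqrt B‖
  have hAB : A ≤ r • B :=
    le_norm_pinvSqrt_conjugate_smul hA'.isSelfAdjoint (nonneg_iff_posSemidef.mpr hB) hsupp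
  have hAC : A ≤ r • C := hAB.trans (smul_le_smul_of_nonneg_left hBC (norm_nonneg _))
  exact norm_conjugate_le_of_le_smul hA' (norm_nonneg _) (isSelfAdjoint_pinvSqrt C) hAC
    (pinvSqrt_mul_self_mul_pinvSqrt_le_one hC.1)
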